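/- For fixed η ∈ (0,1) and N_S > 0, the partial derivative with respect to ξ of the zero-temperature single-mode QFI I(ξ) satisfies (∂_ξ I)(ξ) = 4N_S(√N_S η²/√ξ + O(1)) as ξ → 0⁺; in particular ∂_ξ I(ξ) → +∞ as ξ → 0⁺, so ξ = 0 (the coherent state) cannot be a maximizer of I on [0,1] for any η > 0. -/

import Mathlib

noncomputable def I0 (η NS ξ : ℝ) : ℝ :=
  4*NS*((1-ξ) / (1 - 2*η^2*(Real.sqrt (ξ*NS*(1+ξ*NS)) - ξ*NS))
    + ξ*((1-η^2)^2 + η^4) / ((1-η^2)*(1 + 2*ξ*NS*η^2*(1-η^2))))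

/-!
The only non-smooth ingredient of `I0` at `ξ = 0` is `√(ξ N (1 + ξ N)) = √ξ √N √(1 + ξ N)`, so
`I0 ξ = G (√ξ)` with `G = I0Sqrt η NS` smooth on all of `ℝ`. Then
`I0' ξ = G'(√ξ) / (2√ξ) = G'(0) / (2√ξ) + slope G' 0 (√ξ) / 2`, where the slope tends to
`G''(0) / 2`, and `G'(0) = 8 N^{3/2} η² > 0` comes from the linear term `-2η²√N s` of the
denominator of the coherent part. Hence `I0'` blows up to `+∞` at `0⁺`, `I0` is strictly increasing
just to the right of `0`, and `ξ = 0` is not a maximiser.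
-/

open Real Filter Topology Set

lemma tendsto_sqrt_nhdsGT_zero : Tendsto sqrt (𝓝[>] 0) (𝓝[>] 0) :=
  tendsto_nhdsWithin_iff.2
    ⟨(continuous_sqrt.tendsto' 0 0 sqrt_zero).mono_left nhdsWithin_le_nhds,
      eventually_nhdsWithin_of_forall fun _ hx => sqrt_pos.2 hx⟩

lemma tendsto_div_sqrt_atTop {c : ℝ} (hc : 0 < c) :
    Tendsto (fun x => c / √x) (𝓝[>] 0) atTop := by
  simpa only [div_eq_mul_inv, Function.comp_def] using
    (tendsto_inv_nhdsGT_zero.comp tendsto_sqrt_nhdsGT_zero).const_mul_atTop hc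

section CompSqrt

variable {f g : ℝ → ℝ}

lemma hasDerivAt_of_eqOn_comp_sqrt (hfg : EqOn f (g ∘ sqrt) (Ici 0)) {x : ℝ} (hx : 0 < x)
    (hg : DifferentiableAt ℝ g (√x)) : HasDerivAt f (deriv g (√x) / (2 * √x)) x := by
  have h := hg.hasDerivAt.comp x (hasDerivAt_sqrt hx.ne')
  rw [mul_one_div] at h
  exact h.congr_of_eventuallyEq (eventually_of_mem (Ici_mem_nhds hx) hfg)

lemma tendsto_deriv_sub_of_eqOn_comp_sqrt (hfg : EqOn f (g ∘ sqrt) (Ici 0))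
    (hg : Differentiable ℝ g) (hg' : DifferentiableAt ℝ (deriv g) 0) :
    Tendsto (fun x => deriv f x - deriv g 0 / (2 * √x)) (𝓝[>] 0)
      (𝓝 (deriv (deriv g) 0 / 2)) := by
  have hslope : Tendsto (fun x => slope (deriv g) 0 (√x) / 2) (𝓝[>] 0)
      (𝓝 (deriv (deriv g) 0 / 2)) :=
    ((hasDerivAt_iff_tendsto_slope.1 hg'.hasDerivAt).comp
      (tendsto_sqrt_nhdsGT_zero.mono_right (nhdsWithin_mono _ fun _ h => ne_of_gt h))).div_const 2
  refine hslope.congr' (eventually_nhdsWithin_of_forall fun x (hx : 0 < x) => ?_)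
  have hsx : √x ≠ 0 := (sqrt_pos.2 hx).ne'
  dsimp only
  rw [(hasDerivAt_of_eqOn_comp_sqrt hfg hx (hg _)).deriv, slope_def_field]
  field_simp
  ring

end CompSqrt

lemma not_isMaxOn_of_tendsto_deriv_atTop {f : ℝ → ℝ} {a b : ℝ} (hab : a < b)
    (hf : ContinuousOn f (Icc a b)) (hf' : Tendsto (deriv f) (𝓝[>] a) atTop) :
    ¬IsMaxOn f (Icc a b) a := by
  obtain ⟨u, hau, hu⟩ :=
    mem_nhdsGT_iff_exists_Ioo_subset.1 (hf'.eventually (eventually_gt_atTop 0))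
  have hac : a < min u b := lt_min hau hab
  have hmono : StrictMonoOn f (Icc a (min u b)) :=
    strictMonoOn_of_deriv_pos (convex_Icc a _) (hf.mono (Icc_subset_Icc_right (min_le_right u b)))
      fun x hx => by
        rw [interior_Icc] at hx
        exact hu ⟨hx.1, hx.2.trans_le (min_le_left u b)⟩
  intro hmax
  exact (hmono (left_mem_Icc.2 hac.le) (right_mem_Icc.2 hac.le) hac).not_ge
    (hmax ⟨hac.le, min_le_right u b⟩)

noncomputable def I0Sqrt (η NS s : ℝ) : ℝ :=
  4*NS*((1-s^2) / (1 - 2*η^2*(s*√NS*√(1+s^2*NS) - s^2*NS))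
    + s^2*((1-η^2)^2 + η^4) / ((1-η^2)*(1 + 2*s^2*NS*η^2*(1-η^2))))

section I0Sqrt

variable {η NS : ℝ}

lemma I0_eqOn_I0Sqrt_comp_sqrt (hNS : 0 ≤ NS) :
    EqOn (I0 η NS) (I0Sqrt η NS ∘ sqrt) (Ici 0) := by
  intro ξ (hξ : 0 ≤ ξ)
  simp only [I0, I0Sqrt, Function.comp_apply, sq_sqrt hξ,
    sqrt_mul (mul_nonneg hξ hNS), sqrt_mul hξ]

lemma mul_sqrt_one_add_sq_le (t : ℝ) : t * √(1 + t^2) ≤ t^2 + 1/2 := by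
  nlinarith [sq_nonneg (t - √(1 + t^2)), sq_sqrt (by positivity : (0:ℝ) ≤ 1 + t^2)]

lemma I0Sqrt_denom_left_pos (hη : η^2 < 1) (hNS : 0 ≤ NS) (s : ℝ) :
    0 < 1 - 2*η^2*(s*√NS*√(1+s^2*NS) - s^2*NS) := by
  have h := mul_sqrt_one_add_sq_le (s * √NS)
  rw [mul_pow, sq_sqrt hNS] at h
  nlinarith [sq_nonneg η]

lemma I0Sqrt_denom_right_pos (hη : η^2 < 1) (hNS : 0 ≤ NS) (s : ℝ) :
    0 < (1-η^2)*(1 + 2*s^2*NS*η^2*(1-η^2)) := by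
  have h : 0 < 1 - η^2 := by linarith
  positivity

lemma contDiff_I0Sqrt (hη : η^2 < 1) (hNS : 0 ≤ NS) : ContDiff ℝ 2 (I0Sqrt η NS) := by
  have hq : ContDiff ℝ 2 fun s : ℝ => √(1 + s^2*NS) :=
    (by fun_prop : ContDiff ℝ 2 fun s : ℝ => 1 + s^2*NS).sqrt fun s => by positivity
  unfold I0Sqrt
  refine contDiff_const.mul (ContDiff.add ?_ ?_)
  · exact (by fun_prop : ContDiff ℝ 2 fun s : ℝ => 1 - s^2).div (by fun_prop)
      fun s => (I0Sqrt_denom_left_pos hη hNS s).ne'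
  · exact (by fun_prop : ContDiff ℝ 2 fun s : ℝ => s^2*((1-η^2)^2 + η^4)).div (by fun_prop)
      fun s => (I0Sqrt_denom_right_pos hη hNS s).ne'

lemma hasDerivAt_I0Sqrt_zero (hη : η^2 < 1) :
    HasDerivAt (I0Sqrt η NS) (8*NS*√NS*η^2) 0 := by
  have hsq : HasDerivAt (fun s : ℝ => s^2) 0 0 := by simpa using hasDerivAt_pow 2 (0:ℝ)
  have hq : HasDerivAt (fun s : ℝ => √(1 + s^2*NS)) 0 0 := by
    simpa using ((hsq.mul_const NS).const_add 1).sqrt (by simp)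
  have hD := ((((hasDerivAt_id' 0).mul_const √NS).mul hq).sub (hsq.mul_const NS)).const_mul
    (2*η^2) |>.const_sub 1
  have h1 := (hsq.const_sub 1).div hD (by simp)
  have h2 := (hsq.mul_const ((1-η^2)^2 + η^4)).div
    ((((hsq.const_mul 2).mul_const NS).mul_const (η^2) |>.mul_const (1-η^2) |>.const_add 1).const_mul
      (1-η^2)) (by simpa using (sub_pos.2 hη).ne')
  refine ((h1.add h2).const_mul (4*NS)).congr_deriv ?_
  simp only [neg_zero, Pi.sub_apply, Pi.mul_apply, zero_mul, ne_eq, OfNat.ofNat_ne_zero,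
    not_false_eq_true, zero_pow, add_zero, sqrt_one, mul_one, sub_self, mul_zero, sub_zero,
    one_mul, mul_neg, sub_neg_eq_add, zero_add, one_pow, div_one, zero_div]
  ring

end I0Sqrt

theorem coherent_state_not_optimal (η NS : ℝ) (hη0 : 0 < η) (hη1 : η < 1)
    (hNS : 0 < NS) :
    (∃ C : ℝ, ∀ᶠ ξ in nhdsWithin 0 (Set.Ioi 0),
      |deriv (fun ξ => I0 η NS ξ) ξ - 4*NS*(Real.sqrt NS * η^2 / Real.sqrt ξ)| ≤ C) ∧
    Filter.Tendsto (deriv (fun ξ => I0 η NS ξ)) (nhdsWithin 0 (Set.Ioi 0)) Filter.atTop ∧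
    ¬ IsMaxOn (fun ξ => I0 η NS ξ) (Set.Icc 0 1) 0 := by
  have hη : η^2 < 1 := by nlinarith
  have hfg := I0_eqOn_I0Sqrt_comp_sqrt (η := η) hNS.le
  have hG := contDiff_I0Sqrt hη hNS.le
  have hdiff := tendsto_deriv_sub_of_eqOn_comp_sqrt hfg (hG.differentiable two_ne_zero)
    (hG.differentiable_deriv_two 0)
  simp only [(hasDerivAt_I0Sqrt_zero hη).deriv, show ∀ ξ, 8*NS*√NS*η^2 / (2*√ξ)
    = 4*NS*(√NS*η^2/√ξ) by intro ξ; ring] at hdiff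
  have hsing : Tendsto (fun ξ => 4*NS*(√NS*η^2/√ξ)) (𝓝[>] 0) atTop :=
    (tendsto_div_sqrt_atTop (by positivity)).const_mul_atTop (by positivity)
  have htop : Tendsto (deriv (I0 η NS)) (𝓝[>] 0) atTop :=
    (hdiff.add_atTop hsing).congr fun ξ => sub_add_cancel _ _
  refine ⟨?_, htop, not_isMaxOn_of_tendsto_deriv_atTop one_pos ?_ htop⟩
  · obtain ⟨C, hC⟩ := hdiff.abs.isBoundedUnder_le
    exact ⟨C, hC⟩
  · exact (hG.continuous.comp continuous_sqrt).continuousOn.congr (hfg.mono Icc_subset_Ici_self)
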